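/- arXiv:2605.30835 — 2 statements merged into one kernel-verified Lean document; each statement's English description precedes it below -/
import Mathlib

section
/- Let X and Y be topological spaces with Y path connected, suppose the group 𝓔(X) is nontrivial, and let c : X → Y be a constant map. Then there is no group homomorphism ψ : 𝓔(Y) → 𝓔(X) such that {(ψ(v), v) | v ∈ 𝓔(Y)} equals 𝓔(c); i.e., c is not a strong co-𝓔-map. -/
/-- The setoid on `C(X, Y)` given by the homotopy relation. -/
def homotopicSetoid (X Y : Type*) [TopologicalSpace X] [TopologicalSpace Y] :
    Setoid C(X, Y) :=
  ⟨ContinuousMap.Homotopic, ContinuousMap.Homotopic.equivalence⟩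

/-- The set `[X, Y]` of (free) homotopy classes of continuous maps from `X` to `Y`. -/
abbrev HClass (X Y : Type*) [TopologicalSpace X] [TopologicalSpace Y] :=
  Quotient (homotopicSetoid X Y)

/-- The homotopy class of a continuous map. -/
def hcl {X Y : Type*} [TopologicalSpace X] [TopologicalSpace Y] (f : C(X, Y)) : HClass X Y :=
  Quotient.mk (homotopicSetoid X Y) f

namespace HClass

variable {W X Y Z : Type*} [TopologicalSpace W] [TopologicalSpace X] [TopologicalSpace Y]
  [TopologicalSpace Z]

/-- Composition of homotopy classes. -/
def comp (g : HClass Y Z) (f : HClass X Y) : HClass X Z :=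
  Quotient.map₂ ContinuousMap.comp
    (fun _ _ hg _ _ hf => ContinuousMap.Homotopic.comp hg hf) g f

theorem comp_mk (g : C(Y, Z)) (f : C(X, Y)) : comp (hcl g) (hcl f) = hcl (g.comp f) := rfl

theorem comp_assoc (a : HClass Y Z) (b : HClass X Y) (c : HClass W X) :
    comp (comp a b) c = comp a (comp b c) :=
  Quotient.inductionOn₃ a b c fun _ _ _ => rfl

theorem id_comp (a : HClass X Y) : comp (hcl (ContinuousMap.id Y)) a = a :=
  Quotient.inductionOn a fun f => congrArg (Quotient.mk _) (ContinuousMap.id_comp f)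

theorem comp_id (a : HClass X Y) : comp a (hcl (ContinuousMap.id X)) = a :=
  Quotient.inductionOn a fun f => congrArg (Quotient.mk _) (ContinuousMap.comp_id f)

/-- The monoid `[X, X]` of homotopy classes of self-maps under composition. -/
instance monoid (X : Type*) [TopologicalSpace X] : Monoid (HClass X X) where
  mul a b := comp a b
  one := hcl (ContinuousMap.id X)
  mul_assoc := comp_assoc
  one_mul := id_comp
  mul_one := comp_id

theorem mul_def (a b : HClass X X) : a * b = comp a b := rfl
theorem one_def : (1 : HClass X X) = hcl (ContinuousMap.id X) := rfl

theorem unit_inv_comp (u : (HClass Y Y)ˣ) (a : HClass X Y) :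
    comp (↑u⁻¹ : HClass Y Y) (comp (↑u : HClass Y Y) a) = a := by
  rw [← comp_assoc]
  have h : comp (↑u⁻¹ : HClass Y Y) (↑u : HClass Y Y) = 1 := u.inv_mul
  rw [h]
  exact id_comp a

theorem comp_unit_inv (u : (HClass X X)ˣ) (a : HClass X Y) :
    comp (comp a (↑u : HClass X X)) (↑u⁻¹ : HClass X X) = a := by
  rw [comp_assoc]
  have h : comp (↑u : HClass X X) (↑u⁻¹ : HClass X X) = 1 := u.mul_inv
  rw [h]
  exact comp_id a

end HClass

/-- `𝓔(X)`, the group of homotopy classes of homotopy self-equivalences of `X`: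
the group of units of the monoid `[X, X]`. -/
abbrev SelfEqGroup (X : Type*) [TopologicalSpace X] := (HClass X X)ˣ

section EMap

variable {X Y : Type*} [TopologicalSpace X] [TopologicalSpace Y]

/-- `𝓔(f)`, the subgroup of `𝓔(X) × 𝓔(Y)` of pairs `([h_X], [h_Y])` with
`f ∘ h_X` homotopic to `h_Y ∘ f`. -/
def EMap (f : C(X, Y)) : Subgroup (SelfEqGroup X × SelfEqGroup Y) where
  carrier := { p | HClass.comp (hcl f) ↑p.1 = HClass.comp ↑p.2 (hcl f) }
  one_mem' := by
    show HClass.comp (hcl f) ((1 : SelfEqGroup X) : HClass X X)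
      = HClass.comp ((1 : SelfEqGroup Y) : HClass Y Y) (hcl f)
    rw [Units.val_one, Units.val_one, HClass.one_def, HClass.one_def,
      HClass.comp_id, HClass.id_comp]
  mul_mem' := by
    rintro p q hp hq
    have hp' : HClass.comp (hcl f) ↑p.1 = HClass.comp ↑p.2 (hcl f) := hp
    have hq' : HClass.comp (hcl f) ↑q.1 = HClass.comp ↑q.2 (hcl f) := hq
    show HClass.comp (hcl f) ↑(p.1 * q.1) = HClass.comp ↑(p.2 * q.2) (hcl f)
    rw [Units.val_mul, Units.val_mul, HClass.mul_def, HClass.mul_def,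
      ← HClass.comp_assoc, hp', HClass.comp_assoc, hq', ← HClass.comp_assoc]
  inv_mem' := by
    rintro p hp
    have hp' : HClass.comp (hcl f) ↑p.1 = HClass.comp ↑p.2 (hcl f) := hp
    show HClass.comp (hcl f) ↑p.1⁻¹ = HClass.comp ↑p.2⁻¹ (hcl f)
    calc HClass.comp (hcl f) (↑p.1⁻¹ : HClass X X)
        = HClass.comp (↑p.2⁻¹ : HClass Y Y)
            (HClass.comp (↑p.2 : HClass Y Y)
              (HClass.comp (hcl f) (↑p.1⁻¹ : HClass X X))) :=
          (HClass.unit_inv_comp p.2 _).symm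
      _ = HClass.comp (↑p.2⁻¹ : HClass Y Y)
            (HClass.comp (HClass.comp (↑p.2 : HClass Y Y) (hcl f))
              (↑p.1⁻¹ : HClass X X)) := by
          rw [HClass.comp_assoc]
      _ = HClass.comp (↑p.2⁻¹ : HClass Y Y)
            (HClass.comp (HClass.comp (hcl f) (↑p.1 : HClass X X))
              (↑p.1⁻¹ : HClass X X)) := by
          rw [hp']
      _ = HClass.comp (↑p.2⁻¹ : HClass Y Y) (hcl f) := by
          rw [HClass.comp_unit_inv]

end EMap

theorem HClass.comp_const {X Y Z : Type*} [TopologicalSpace X] [TopologicalSpace Y]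
    [TopologicalSpace Z] (z : Z) (a : HClass X Y) :
    HClass.comp (hcl (ContinuousMap.const Y z)) a = hcl (ContinuousMap.const X z) :=
  Quotient.inductionOn a fun f => congrArg (Quotient.mk _) (ContinuousMap.const_comp z f)

theorem mk_one_mem_EMap_of_comp_eq {X Y : Type*} [TopologicalSpace X] [TopologicalSpace Y]
    {f : C(X, Y)} {u : SelfEqGroup X} (hu : HClass.comp (hcl f) ↑u = hcl f) :
    (u, 1) ∈ EMap f := by
  show HClass.comp (hcl f) ↑u = HClass.comp ((1 : SelfEqGroup Y) : HClass Y Y) (hcl f)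
  rw [hu, Units.val_one, HClass.one_def, HClass.id_comp]

theorem MonoidHom.eq_one_of_mk_one_mem_range {G H : Type*} [MulOneClass G] [MulOneClass H]
    (ψ : H →* G) {u : G} (h : (u, 1) ∈ Set.range fun v : H => (ψ v, v)) : u = 1 := by
  obtain ⟨v, hv⟩ := h
  rw [Prod.mk.injEq] at hv
  rw [← hv.1, hv.2, map_one]

theorem const_not_strong_coE_map_general {X Y : Type*} [TopologicalSpace X] [TopologicalSpace Y]
    (hX : Nontrivial (SelfEqGroup X))
    (c : C(X, Y)) (hc : ∃ y₀ : Y, ∀ x : X, c x = y₀) :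
    ¬ ∃ ψ : SelfEqGroup Y →* SelfEqGroup X,
        (Set.range fun v : SelfEqGroup Y => (ψ v, v)) =
          (EMap c : Set (SelfEqGroup X × SelfEqGroup Y)) := by
  rintro ⟨ψ, hψ⟩
  obtain ⟨y₀, hy⟩ := hc
  obtain ⟨u, hu⟩ := exists_ne (1 : SelfEqGroup X)
  obtain rfl : c = ContinuousMap.const X y₀ := ContinuousMap.ext hy
  -- `c ∘ h ≃ c` for every `h`, so `(u, 1) ∈ 𝓔(c)`, which no graph of a homomorphism contains.
  have hmem : (u, 1) ∈ EMap (ContinuousMap.const X y₀) :=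
    mk_one_mem_EMap_of_comp_eq (HClass.comp_const y₀ _)
  exact hu (ψ.eq_one_of_mk_one_mem_range (hψ ▸ hmem))

/-- if `Y` is path connected, `𝓔(X)` is nontrivial and `c : X → Y` is a
constant map, then there is no group homomorphism `ψ : 𝓔(Y) → 𝓔(X)` such that
`{(ψ(v), v) | v ∈ 𝓔(Y)}` equals `𝓔(c)`; i.e. `c` is not a strong co-`𝓔`-map. -/
theorem const_not_strong_coE_map {X Y : Type*} [TopologicalSpace X] [TopologicalSpace Y]
    [PathConnectedSpace Y] (hX : Nontrivial (SelfEqGroup X))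
    (c : C(X, Y)) (hc : ∃ y₀ : Y, ∀ x : X, c x = y₀) :
    ¬ ∃ ψ : SelfEqGroup Y →* SelfEqGroup X,
        (Set.range fun v : SelfEqGroup Y => (ψ v, v)) =
          (EMap c : Set (SelfEqGroup X × SelfEqGroup Y)) :=
  const_not_strong_coE_map_general hX c hc
end

section
/- Let X and Z be topological spaces with Z path connected, let z₀ ∈ Z, let i₁ : X → X × Z be the continuous map x ↦ (x, z₀), and let p₂ : X × Z → Z be the projection. Then 𝓔(p₂) © 𝓔(i₁) = 𝓔(p₂ ∘ i₁); i.e., the pair (i₁, p₂) of the trivial fibration is an 𝓔-strict-functor pair. -/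
/-- The composition `S' © S` of two group correspondences. -/
def Subgroup.corrComp {G F K : Type*} [Group G] [Group F] [Group K]
    (S' : Subgroup (F × K)) (S : Subgroup (G × F)) : Subgroup (G × K) where
  carrier := { p : G × K | ∃ f : F, (p.1, f) ∈ S ∧ (f, p.2) ∈ S' }
  one_mem' := ⟨1, S.one_mem, S'.one_mem⟩
  mul_mem' := by
    rintro p q ⟨a, ha1, ha2⟩ ⟨b, hb1, hb2⟩
    exact ⟨a * b, S.mul_mem ha1 hb1, S'.mul_mem ha2 hb2⟩
  inv_mem' := by
    rintro p ⟨a, ha1, ha2⟩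
    exact ⟨a⁻¹, S.inv_mem ha1, S'.inv_mem ha2⟩

/-- The inclusion `i₁ : X → X × Z`, `x ↦ (x, z₀)`. -/
def trivialFibIncl (X : Type*) [TopologicalSpace X] {Z : Type*} [TopologicalSpace Z]
    (z₀ : Z) : C(X, X × Z) :=
  (ContinuousMap.id X).prodMk (ContinuousMap.const X z₀)

/-
Since `p₂ ∘ i₁` is constant and `Z` is path connected, `𝓔(p₂ ∘ i₁)` is all of `𝓔(X) × 𝓔(Z)`.
Conversely, a pair `([f], [g])` factors through the self-equivalence `[f × g]` of `X × Z`: it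
commutes with `p₂` on the nose, and with `i₁` up to the homotopy `(f, γ)`, where `γ` is a path
from `z₀` to `g z₀`.
-/

namespace HClass

variable {X X' Y Y' Z Z' : Type*} [TopologicalSpace X] [TopologicalSpace X']
  [TopologicalSpace Y] [TopologicalSpace Y'] [TopologicalSpace Z] [TopologicalSpace Z']

theorem hcl_const_eq_hcl_const [PathConnectedSpace Y] (y y' : Y) :
    hcl (ContinuousMap.const X y) = hcl (ContinuousMap.const X y') :=
  Quotient.sound ⟨(PathConnectedSpace.somePath y y').toHomotopyConst⟩

theorem const_comp (y : Y) (a : HClass X X') :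
    comp (hcl (ContinuousMap.const X' y)) a = hcl (ContinuousMap.const X y) :=
  Quotient.inductionOn a fun _ => rfl

theorem comp_const_s14 [PathConnectedSpace Y'] (y : Y) (y' : Y') (b : HClass Y Y') :
    comp b (hcl (ContinuousMap.const X y)) = hcl (ContinuousMap.const X y') :=
  Quotient.inductionOn b fun g => hcl_const_eq_hcl_const (g y) y'

def prodMap (a : HClass X X') (b : HClass Z Z') : HClass (X × Z) (X' × Z') :=
  Quotient.map₂ ContinuousMap.prodMap
    (fun _ _ hf _ _ hg => ContinuousMap.Homotopic.prodMap hf hg) a b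

theorem prodMap_comp_prodMap (a : HClass X' X) (a' : HClass X X') (b : HClass Z' Z)
    (b' : HClass Z Z') : comp (prodMap a b) (prodMap a' b') = prodMap (comp a a') (comp b b') :=
  Quotient.inductionOn₂ a a' fun _ _ => Quotient.inductionOn₂ b b' fun _ _ => rfl

theorem prodMap_one : prodMap (1 : HClass X X) (1 : HClass Z Z) = 1 := rfl

theorem snd_comp_prodMap (a : HClass X X') (b : HClass Z Z') :
    comp (hcl ContinuousMap.snd) (prodMap a b) = comp b (hcl ContinuousMap.snd) :=
  Quotient.inductionOn₂ a b fun _ _ => rfl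

theorem trivialFibIncl_comp [PathConnectedSpace Z'] (z₀ : Z) (z₀' : Z') (a : HClass X X')
    (b : HClass Z Z') :
    comp (hcl (trivialFibIncl X' z₀')) a = comp (prodMap a b) (hcl (trivialFibIncl X z₀)) :=
  Quotient.inductionOn₂ a b fun f g => Quotient.sound <|
    (ContinuousMap.Homotopic.refl f).prodMk
      ⟨(PathConnectedSpace.somePath z₀' (g z₀)).toHomotopyConst⟩

end HClass

namespace SelfEqGroup

variable {X Z : Type*} [TopologicalSpace X] [TopologicalSpace Z]

def prod (u : SelfEqGroup X) (v : SelfEqGroup Z) : SelfEqGroup (X × Z) where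
  val := HClass.prodMap u v
  inv := HClass.prodMap ↑u⁻¹ ↑v⁻¹
  val_inv := by
    rw [HClass.mul_def, HClass.prodMap_comp_prodMap, ← HClass.mul_def, ← HClass.mul_def,
      u.mul_inv, v.mul_inv, HClass.prodMap_one]
  inv_val := by
    rw [HClass.mul_def, HClass.prodMap_comp_prodMap, ← HClass.mul_def, ← HClass.mul_def,
      u.inv_mul, v.inv_mul, HClass.prodMap_one]

theorem prod_mem_EMap_snd (u : SelfEqGroup X) (v : SelfEqGroup Z) :
    (u.prod v, v) ∈ EMap (ContinuousMap.snd : C(X × Z, Z)) :=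
  HClass.snd_comp_prodMap (u : HClass X X) (v : HClass Z Z)

theorem mem_EMap_trivialFibIncl_prod [PathConnectedSpace Z] (z₀ : Z) (u : SelfEqGroup X)
    (v : SelfEqGroup Z) : (u, u.prod v) ∈ EMap (trivialFibIncl X z₀) :=
  HClass.trivialFibIncl_comp z₀ z₀ (u : HClass X X) (v : HClass Z Z)

end SelfEqGroup

theorem EMap_const_eq_top {X Y : Type*} [TopologicalSpace X] [TopologicalSpace Y]
    [PathConnectedSpace Y] (y : Y) : EMap (ContinuousMap.const X y) = ⊤ :=
  eq_top_iff.2 fun p _ => by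
    change HClass.comp _ (p.1 : HClass X X) = HClass.comp (p.2 : HClass Y Y) _
    rw [HClass.const_comp, HClass.comp_const_s14]

/-- for `Z` path connected and the trivial fibration
`X → X × Z → Z` (with `i₁ : x ↦ (x, z₀)` and `p₂` the projection),
`𝓔(p₂) © 𝓔(i₁) = 𝓔(p₂ ∘ i₁)`; i.e. `(i₁, p₂)` is an `𝓔`-strict-functor pair. -/
theorem EMap_trivial_fibration {X Z : Type*} [TopologicalSpace X] [TopologicalSpace Z]
    [PathConnectedSpace Z] (z₀ : Z) :
    (EMap (ContinuousMap.snd : C(X × Z, Z))).corrComp (EMap (trivialFibIncl X z₀)) =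
      EMap ((ContinuousMap.snd : C(X × Z, Z)).comp (trivialFibIncl X z₀)) := by
  have snd_comp_trivialFibIncl :
      (ContinuousMap.snd : C(X × Z, Z)).comp (trivialFibIncl X z₀) = ContinuousMap.const X z₀ :=
    rfl
  rw [snd_comp_trivialFibIncl, EMap_const_eq_top, eq_top_iff]
  rintro ⟨u, v⟩ -
  exact ⟨u.prod v, SelfEqGroup.mem_EMap_trivialFibIncl_prod z₀ u v,
    SelfEqGroup.prod_mem_EMap_snd u v⟩
end
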